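/- The group presented by generators x, y, p, q, r, s with relators y⁻¹p⁻¹xp, q⁻¹xpx⁻¹, r⁻¹sqs⁻¹, s⁻¹q⁻¹pq, r⁻¹xsx⁻¹, x⁻¹s⁻¹xq⁻¹p², xy⁻¹, and xqx⁻¹q⁻¹ is isomorphic to ℤ × ℤ (equivalently, to the presented group ⟨x, q | [x, q]⟩), with x and q mapping to the two generators. -/

import Mathlib

/-- Generators `x, y, p, q, r, s` indexed by `Fin 6` in that order. -/
def whRels : Set (FreeGroup (Fin 6)) :=
  letI x := FreeGroup.of (0 : Fin 6)
  letI y := FreeGroup.of (1 : Fin 6)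
  letI p := FreeGroup.of (2 : Fin 6)
  letI q := FreeGroup.of (3 : Fin 6)
  letI r := FreeGroup.of (4 : Fin 6)
  letI s := FreeGroup.of (5 : Fin 6)
  { y⁻¹ * p⁻¹ * x * p,
    q⁻¹ * x * p * x⁻¹,
    r⁻¹ * s * q * s⁻¹,
    s⁻¹ * q⁻¹ * p * q,
    r⁻¹ * x * s * x⁻¹,
    x⁻¹ * s⁻¹ * x * q⁻¹ * p ^ 2,
    x * y⁻¹,
    x * q * x⁻¹ * q⁻¹ }

/-! The relator `x y⁻¹` gives `y = x`, and then the first Wirtinger relator says that `x` and `p`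
commute. The remaining Wirtinger relators, read as conjugation formulas `q = x p x⁻¹`,
`s = q⁻¹ p q`, `r = s q s⁻¹`, collapse `p, q, r, s` to a single generator, which commutes with `x`
by the last relator. So `(m, n) ↦ xᵐ qⁿ` is a surjection from `ℤ × ℤ` onto the group; it is
inverted by the map to `ℤ × ℤ` sending `x, y` to the first and `p, q, r, s` to the second
generator, which respects all relators. -/

section ZPowersPair

variable {G : Type*} [Group G] {a b : G}

def zpowersPairHom (hab : Commute a b) : Multiplicative ℤ × Multiplicative ℤ →* G :=
  (zpowersHom G a).noncommCoprod (zpowersHom G b) fun m n => hab.zpow_zpow m.toAdd n.toAdd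

@[simp]
theorem zpowersPairHom_apply (hab : Commute a b) (mn : Multiplicative ℤ × Multiplicative ℤ) :
    zpowersPairHom hab mn = a ^ mn.1.toAdd * b ^ mn.2.toAdd :=
  rfl

theorem comp_zpowersPairHom_eq_id (hab : Commute a b)
    {f : G →* Multiplicative ℤ × Multiplicative ℤ} (ha : f a = (.ofAdd 1, 1))
    (hb : f b = (1, .ofAdd 1)) : f.comp (zpowersPairHom hab) = MonoidHom.id _ := by
  ext ⟨m, n⟩ <;> simp [ha, hb, ← ofAdd_zsmul]

end ZPowersPair

namespace WhiteheadPresentation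

local notation "X" => (PresentedGroup.of (rels := whRels) (0 : Fin 6))
local notation "Y" => (PresentedGroup.of (rels := whRels) (1 : Fin 6))
local notation "P" => (PresentedGroup.of (rels := whRels) (2 : Fin 6))
local notation "Q" => (PresentedGroup.of (rels := whRels) (3 : Fin 6))
local notation "R" => (PresentedGroup.of (rels := whRels) (4 : Fin 6))
local notation "S" => (PresentedGroup.of (rels := whRels) (5 : Fin 6))

theorem relators_eq_one :
    Y⁻¹ * P⁻¹ * X * P = 1 ∧ Q⁻¹ * X * P * X⁻¹ = 1 ∧ R⁻¹ * S * Q * S⁻¹ = 1 ∧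
      S⁻¹ * Q⁻¹ * P * Q = 1 ∧ R⁻¹ * X * S * X⁻¹ = 1 ∧ X⁻¹ * S⁻¹ * X * Q⁻¹ * P ^ 2 = 1 ∧
      X * Y⁻¹ = 1 ∧ X * Q * X⁻¹ * Q⁻¹ = 1 := by
  have h := fun r (hr : r ∈ whRels) => PresentedGroup.one_of_mem hr
  simp only [whRels, Set.mem_insert_iff, Set.mem_singleton_iff, forall_eq_or_imp, forall_eq] at h
  exact h

theorem generators_eq : Y = X ∧ P = Q ∧ R = Q ∧ S = Q := by
  obtain ⟨h₁, h₂, h₃, h₄, -, -, h₇, -⟩ := relators_eq_one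
  simp only [mul_assoc, inv_mul_eq_one] at h₁ h₂ h₃ h₄
  have hY : Y = X := (mul_inv_eq_one.mp h₇).symm
  have hPX : Commute P X := eq_inv_mul_iff_mul_eq.mp (hY ▸ h₁)
  have hQ : Q = P := by rw [h₂, ← mul_assoc, hPX.symm.mul_inv_cancel]
  have hS : S = P := by rw [h₄, hQ, inv_mul_cancel_left]
  have hR : R = P := by rw [h₃, hS, hQ, mul_inv_cancel, mul_one]
  exact ⟨hY, hQ.symm, hR.trans hQ.symm, hS.trans hQ.symm⟩

theorem commute_x_q : Commute X Q := by
  obtain ⟨-, -, -, -, -, -, -, h₈⟩ := relators_eq_one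
  exact commutatorElement_eq_one_iff_commute.mp h₈

def generatorImage : Fin 6 → Multiplicative ℤ × Multiplicative ℤ :=
  ![(.ofAdd 1, 1), (.ofAdd 1, 1), (1, .ofAdd 1), (1, .ofAdd 1), (1, .ofAdd 1), (1, .ofAdd 1)]

-- Each relator has exponent sum zero both in `x, y` and in `p, q, r, s`.
theorem lift_generatorImage_eq_one : ∀ r ∈ whRels, FreeGroup.lift generatorImage r = 1 := by
  simp only [whRels, Set.mem_insert_iff, Set.mem_singleton_iff, forall_eq_or_imp, forall_eq,
    map_mul, map_inv, map_pow, FreeGroup.lift_apply_of]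
  simp [generatorImage, Prod.ext_iff, ← ofAdd_neg, ← ofAdd_add, ← ofAdd_nsmul]

def toProd : PresentedGroup whRels →* Multiplicative ℤ × Multiplicative ℤ :=
  PresentedGroup.toGroup lift_generatorImage_eq_one

theorem toProd_x : toProd X = (.ofAdd 1, 1) := PresentedGroup.toGroup.of _

theorem toProd_q : toProd Q = (1, .ofAdd 1) := PresentedGroup.toGroup.of _

theorem zpowersPairHom_comp_toProd : (zpowersPairHom commute_x_q).comp toProd = MonoidHom.id _ := by
  obtain ⟨hY, hP, hR, hS⟩ := generators_eq
  refine PresentedGroup.ext fun i => ?_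
  fin_cases i <;> simp [toProd, generatorImage, hY, hP, hR, hS]

end WhiteheadPresentation

/-- The presented group with the Wirtinger relators of the Whitehead link,
together with the Dehn-filling and 2-handle relators, is isomorphic to
`ℤ × ℤ`, with `x` and `q` mapping to the two generators. -/
theorem whitehead_presentation_iso_int_prod_int :
    ∃ e : PresentedGroup whRels ≃* (Multiplicative ℤ × Multiplicative ℤ),
      e (PresentedGroup.of (0 : Fin 6)) = (Multiplicative.ofAdd 1, 1) ∧
      e (PresentedGroup.of (3 : Fin 6)) = (1, Multiplicative.ofAdd 1) := by
  open WhiteheadPresentation in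
  exact ⟨toProd.toMulEquiv _ zpowersPairHom_comp_toProd
    (comp_zpowersPairHom_eq_id commute_x_q toProd_x toProd_q), toProd_x, toProd_q⟩
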